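/- Let G be a divergence-free symmetric (0,2)-tensor on a Riemannian manifold (M^n,g) with tr_g G = c·Q for a function Q and constant c. Then for any vector field X and bounded domain Ω with smooth boundary, ∫_{∂Ω} G(X,ν_g) dω_g = (1/2)∫_Ω ⟨G, £_{g,conf}X⟩_g dV_g + (c/n)∫_Ω Q div_g X dV_g, where £_{g,conf}X := £_X g − (2/n)(div_g X) g is the conformal Killing operator. -/

import Mathlib

open MeasureTheory Finset
set_option linter.unusedSectionVars false
noncomputable section

/-- Euclidean space ℝⁿ (coordinate chart of the manifold). -/
abbrev Eu (n : ℕ) := EuclideanSpace ℝ (Fin n)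

/-- Partial derivative ∂ᵢf of a scalar field. -/
def pd {n : ℕ} (i : Fin n) (f : Eu n → ℝ) (x : Eu n) : ℝ :=
  fderiv ℝ f x (EuclideanSpace.single i 1)

/-- Christoffel symbols Γᵏᵢⱼ = (1/2)gᵏˡ(∂ᵢg_{lj} + ∂ⱼg_{li} − ∂_l g_{ij}). -/
def chris {n : ℕ} (g ginv : Eu n → Matrix (Fin n) (Fin n) ℝ)
    (k i j : Fin n) (x : Eu n) : ℝ :=
  (1/2) * ∑ l, ginv x k l *
    (pd i (fun y => g y l j) x + pd j (fun y => g y l i) x - pd l (fun y => g y i j) x)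

/-- Covariant derivative of a (0,2)-tensor: ∇_c G_{ab}. -/
def covT {n : ℕ} (g ginv : Eu n → Matrix (Fin n) (Fin n) ℝ)
    (G : Eu n → Matrix (Fin n) (Fin n) ℝ) (c a b : Fin n) (x : Eu n) : ℝ :=
  pd c (fun y => G y a b) x - (∑ d, chris g ginv d c a x * G x d b)
    - (∑ d, chris g ginv d c b x * G x a d)

/-- Covariant divergence (div_g G)_b = ∇ᵃG_{ab} = gᵃᶜ∇_c G_{ab}. -/
def divT {n : ℕ} (g ginv : Eu n → Matrix (Fin n) (Fin n) ℝ)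
    (G : Eu n → Matrix (Fin n) (Fin n) ℝ) (b : Fin n) (x : Eu n) : ℝ :=
  ∑ a, ∑ c, ginv x a c * covT g ginv G c a b x

/-- Lie derivative of the metric: (£_X g)_{ab} = Xᶜ∂_c g_{ab} + g_{cb}∂_a Xᶜ + g_{ac}∂_b Xᶜ. -/
def lieDer {n : ℕ} (g : Eu n → Matrix (Fin n) (Fin n) ℝ)
    (X : Eu n → Fin n → ℝ) (a b : Fin n) (x : Eu n) : ℝ :=
  ∑ c, (X x c * pd c (fun y => g y a b) x
    + g x c b * pd a (fun y => X y c) x + g x a c * pd b (fun y => X y c) x)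

/-- Covariant divergence of a vector field: div_g X = ∂_a Xᵃ + Γᵃ_{ac}Xᶜ. -/
def divV {n : ℕ} (g ginv : Eu n → Matrix (Fin n) (Fin n) ℝ)
    (X : Eu n → Fin n → ℝ) (x : Eu n) : ℝ :=
  (∑ a, pd a (fun y => X y a) x) + ∑ a, ∑ c, chris g ginv a a c x * X x c

lemma pd_add {n} {f h : Eu n → ℝ} {x} (i : Fin n)
    (hf : DifferentiableAt ℝ f x) (hh : DifferentiableAt ℝ h x) :
    pd i (fun y => f y + h y) x = pd i f x + pd i h x := by
  simp [pd, fderiv_fun_add hf hh]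

lemma pd_mul {n} {f h : Eu n → ℝ} {x} (i : Fin n)
    (hf : DifferentiableAt ℝ f x) (hh : DifferentiableAt ℝ h x) :
    pd i (fun y => f y * h y) x = pd i f x * h x + f x * pd i h x := by
  simp [pd, fderiv_fun_mul hf hh]; ring

lemma pd_sum {n} {ι : Type*} (s : Finset ι) {f : ι → Eu n → ℝ} {x} (i : Fin n)
    (hf : ∀ j ∈ s, DifferentiableAt ℝ (f j) x) :
    pd i (fun y => ∑ j ∈ s, f j y) x = ∑ j ∈ s, pd i (f j) x := by
  simp [pd, fderiv_fun_sum hf]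

lemma pd_const {n} (i : Fin n) (c : ℝ) (x : Eu n) : pd i (fun _ => c) x = 0 := by
  simp [pd]

lemma pd_cont {n} (f : Eu n → ℝ) (hf : ContDiff ℝ (⊤ : ℕ∞) f) (i : Fin n) : Continuous (pd i f) :=
  (hf.continuous_fderiv (by simp)).clm_apply continuous_const


/-- abstract Christoffel symbol -/
def CS {ι : Type*} [Fintype ι] (gi : ι → ι → ℝ) (Dg : ι → ι → ι → ℝ) (k i j : ι) : ℝ :=
  (1/2) * ∑ l, gi k l * (Dg i l j + Dg j l i - Dg l i j)

variable {ι : Type*} [Fintype ι] [DecidableEq ι]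

lemma nested2 (F : ι → ι → ℝ) :
    ∑ p : ι × ι, F p.1 p.2 = ∑ a, ∑ b, F a b := by
  simp [Fintype.sum_prod_type]

lemma nested3 (F : ι → ι → ι → ℝ) :
    ∑ p : ι × ι × ι, F p.1 p.2.1 p.2.2 = ∑ a, ∑ b, ∑ c, F a b c := by
  simp [Fintype.sum_prod_type]

lemma nested4 (F : ι → ι → ι → ι → ℝ) :
    ∑ p : ι × ι × ι × ι, F p.1 p.2.1 p.2.2.1 p.2.2.2 = ∑ a, ∑ b, ∑ c, ∑ d, F a b c d := by
  simp [Fintype.sum_prod_type]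

lemma nested5 (F : ι → ι → ι → ι → ι → ℝ) :
    ∑ p : ι × ι × ι × ι × ι, F p.1 p.2.1 p.2.2.1 p.2.2.2.1 p.2.2.2.2
      = ∑ a, ∑ b, ∑ c, ∑ d, ∑ e, F a b c d e := by
  simp [Fintype.sum_prod_type]

/-- delta contraction -/
lemma contrR (gi gm : ι → ι → ℝ) (hgm : ∀ i j, gm i j = gm j i)
    (hdelta : ∀ i j, (∑ k, gi i k * gm k j) = if i = j then 1 else 0)
    (b : ι) (F : ι → ℝ) : ∑ d, ∑ e, gi b d * (gm e d * F e) = F b := by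
  rw [Finset.sum_comm]
  have h1 : ∀ e, ∑ d, gi b d * (gm e d * F e) = (if b = e then 1 else 0) * F e := by
    intro e
    calc ∑ d, gi b d * (gm e d * F e) = (∑ d, gi b d * gm d e) * F e := by
          rw [Finset.sum_mul]
          exact Finset.sum_congr rfl fun d _ => by rw [hgm e d]; ring
      _ = _ := by rw [hdelta]
  rw [Finset.sum_congr rfl fun e _ => h1 e]
  simp

/-- expansion of a product with a Christoffel symbol -/
lemma csexp (gi : ι → ι → ℝ) (Dg : ι → ι → ι → ℝ) (i j k : ι) (u v : ℝ) :
    u * (CS gi Dg k i j * v)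
      = (∑ l, u * v * (1/2) * (gi k l * Dg i l j))
        + (∑ l, u * v * (1/2) * (gi k l * Dg j l i))
        - (∑ l, u * v * (1/2) * (gi k l * Dg l i j)) := by
  rw [← Finset.sum_add_distrib, ← Finset.sum_sub_distrib]
  rw [show (∑ l, (u * v * (1/2) * (gi k l * Dg i l j) + u * v * (1/2) * (gi k l * Dg j l i)
        - u * v * (1/2) * (gi k l * Dg l i j)))
      = ∑ l, (u * v * (1/2)) * (gi k l * (Dg i l j + Dg j l i - Dg l i j)) from
    Finset.sum_congr rfl fun l _ => by ring]
  rw [← Finset.mul_sum]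
  simp only [CS]; ring

set_option maxHeartbeats 1000000 in
theorem keyalg (gi gm Gm : ι → ι → ℝ) (Xv : ι → ℝ)
    (Dg DG : ι → ι → ι → ℝ) (DX : ι → ι → ℝ) (Dgi : ι → ι → ι → ℝ)
    (hgi : ∀ i j, gi i j = gi j i) (hgm : ∀ i j, gm i j = gm j i)
    (hGm : ∀ i j, Gm i j = Gm j i) (hDg : ∀ k i j, Dg k i j = Dg k j i)
    (hdelta : ∀ i j, (∑ k, gi i k * gm k j) = if i = j then 1 else 0)
    (hDgi : ∀ k i j, Dgi k i j = -∑ p, ∑ q, gi i p * Dg k p q * gi q j)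
    (hdf : ∀ b, ∑ a, ∑ e, gi a e * (DG e a b - (∑ d, CS gi Dg d e a * Gm d b)
        - (∑ d, CS gi Dg d e b * Gm a d)) = 0) :
    (∑ b, ∑ a, ∑ c, (Dgi b b a * Gm a c * Xv c + gi b a * DG b a c * Xv c
        + gi b a * Gm a c * DX b c))
      + ∑ b, ∑ e, CS gi Dg b b e * (∑ a, ∑ c, gi e a * Gm a c * Xv c)
    = (1/2) * ∑ a, ∑ b, ∑ c, ∑ d, gi a c * gi b d * Gm a b *
        (∑ e, (Xv e * Dg e c d + gm e d * DX c e + gm c e * DX d e)) := by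
  classical
  -- splitting the left-hand big sum
  have hsplit : (∑ b, ∑ a, ∑ c, (Dgi b b a * Gm a c * Xv c + gi b a * DG b a c * Xv c
        + gi b a * Gm a c * DX b c))
      = (∑ b, ∑ a, ∑ c, Dgi b b a * Gm a c * Xv c)
        + (∑ b, ∑ a, ∑ c, gi b a * DG b a c * Xv c)
        + (∑ b, ∑ a, ∑ c, gi b a * Gm a c * DX b c) := by
    simp [Finset.sum_add_distrib]
  -- splitting the right-hand big sum
  have hRsplit : (∑ a, ∑ b, ∑ c, ∑ d, gi a c * gi b d * Gm a b *
        (∑ e, (Xv e * Dg e c d + gm e d * DX c e + gm c e * DX d e)))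
      = (∑ a, ∑ b, ∑ c, ∑ d, gi a c * gi b d * Gm a b * (∑ e, Xv e * Dg e c d))
        + (∑ a, ∑ b, ∑ c, ∑ d, gi a c * gi b d * Gm a b * (∑ e, gm e d * DX c e))
        + (∑ a, ∑ b, ∑ c, ∑ d, gi a c * gi b d * Gm a b * (∑ e, gm c e * DX d e)) := by
    simp [Finset.sum_add_distrib, mul_add]
  -- third piece equals second piece
  have hS32 : (∑ a, ∑ b, ∑ c, ∑ d, gi a c * gi b d * Gm a b * (∑ e, gm c e * DX d e))
      = (∑ a, ∑ b, ∑ c, ∑ d, gi a c * gi b d * Gm a b * (∑ e, gm e d * DX c e)) := by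
    rw [← nested4 (fun a b c d => gi a c * gi b d * Gm a b * (∑ e, gm c e * DX d e)),
        ← nested4 (fun a b c d => gi a c * gi b d * Gm a b * (∑ e, gm e d * DX c e))]
    refine Fintype.sum_equiv ⟨fun p => (p.2.1, p.1, p.2.2.2, p.2.2.1),
      fun p => (p.2.1, p.1, p.2.2.2, p.2.2.1), fun p => rfl, fun p => rfl⟩ _ _ ?_
    rintro ⟨a, b, c, d⟩
    simp only [Equiv.coe_fn_mk]
    rw [hGm b a, show (∑ e, gm e c * DX d e) = ∑ e, gm c e * DX d e from
      Finset.sum_congr rfl fun e _ => by rw [hgm e c]]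
    ring
  -- contracting the second piece
  have hS2T : (∑ a, ∑ b, ∑ c, ∑ d, gi a c * gi b d * Gm a b * (∑ e, gm e d * DX c e))
      = ∑ a, ∑ b, ∑ c, gi a c * Gm a b * DX c b := by
    refine Finset.sum_congr rfl fun a _ => Finset.sum_congr rfl fun b _ =>
      Finset.sum_congr rfl fun cc _ => ?_
    have h1 : ∀ d, gi a cc * gi b d * Gm a b * (∑ e, gm e d * DX cc e)
        = (gi a cc * Gm a b) * (∑ e, gi b d * (gm e d * DX cc e)) := by
      intro d; rw [Finset.mul_sum, Finset.mul_sum]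
      exact Finset.sum_congr rfl fun e _ => by ring
    rw [Finset.sum_congr rfl fun d _ => h1 d, ← Finset.mul_sum,
      contrR gi gm hgm hdelta b (fun e => DX cc e)]
  have hTL3 : (∑ a, ∑ b, ∑ c, gi a c * Gm a b * DX c b)
      = ∑ b, ∑ a, ∑ c, gi b a * Gm a c * DX b c := by
    rw [← nested3 (fun a b c => gi a c * Gm a b * DX c b),
        ← nested3 (fun b a c => gi b a * Gm a c * DX b c)]
    refine Fintype.sum_equiv ⟨fun p => (p.2.2, p.1, p.2.1), fun p => (p.2.1, p.2.2, p.1),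
      fun p => rfl, fun p => rfl⟩ _ _ ?_
    rintro ⟨a, b, c⟩; simp only [Equiv.coe_fn_mk]
    rw [hgi c a]
  -- reshaping L2
  have hL2 : (∑ b, ∑ a, ∑ c, gi b a * DG b a c * Xv c)
      = ∑ cc, Xv cc * (∑ a, ∑ e, gi a e * DG e a cc) := by
    have h0 : (∑ cc, Xv cc * (∑ a, ∑ e, gi a e * DG e a cc))
        = ∑ cc, ∑ a, ∑ e, Xv cc * (gi a e * DG e a cc) := by
      refine Finset.sum_congr rfl fun cc _ => ?_
      rw [Finset.mul_sum]
      exact Finset.sum_congr rfl fun a _ => by rw [Finset.mul_sum]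
    rw [h0, ← nested3 (fun b a c => gi b a * DG b a c * Xv c),
        ← nested3 (fun cc a e => Xv cc * (gi a e * DG e a cc))]
    refine Fintype.sum_equiv ⟨fun p => (p.2.2, p.2.1, p.1), fun p => (p.2.2, p.2.1, p.1),
      fun p => rfl, fun p => rfl⟩ _ _ ?_
    rintro ⟨b, a, c⟩; simp only [Equiv.coe_fn_mk]
    rw [hgi a b]; ring
  -- the divergence-free identity rearranged
  have hdf' : ∀ cc, (∑ a, ∑ e, gi a e * DG e a cc)
      = (∑ a, ∑ e, ∑ d, gi a e * (CS gi Dg d e a * Gm d cc))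
        + (∑ a, ∑ e, ∑ d, gi a e * (CS gi Dg d e cc * Gm a d)) := by
    intro cc
    have h := hdf cc
    simp only [mul_sub, Finset.mul_sum, Finset.sum_sub_distrib] at h
    linarith

  -- expansion of the B part of the divergence-free identity
  have hBexp : ∀ cc, (∑ a, ∑ e, ∑ d, gi a e * (CS gi Dg d e cc * Gm a d))
      = (∑ a, ∑ e, ∑ d, ∑ l, gi a e * Gm a d * (1/2) * (gi d l * Dg e l cc))
        + (∑ a, ∑ e, ∑ d, ∑ l, gi a e * Gm a d * (1/2) * (gi d l * Dg cc l e))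
        - (∑ a, ∑ e, ∑ d, ∑ l, gi a e * Gm a d * (1/2) * (gi d l * Dg l e cc)) := by
    intro cc
    calc (∑ a, ∑ e, ∑ d, gi a e * (CS gi Dg d e cc * Gm a d))
        = ∑ a, ∑ e, ∑ d, ((∑ l, gi a e * Gm a d * (1/2) * (gi d l * Dg e l cc))
            + (∑ l, gi a e * Gm a d * (1/2) * (gi d l * Dg cc l e))
            - (∑ l, gi a e * Gm a d * (1/2) * (gi d l * Dg l e cc))) :=
          Finset.sum_congr rfl fun a _ => Finset.sum_congr rfl fun e _ =>
            Finset.sum_congr rfl fun d _ => csexp gi Dg e cc d (gi a e) (Gm a d)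
      _ = _ := by simp [Finset.sum_add_distrib, Finset.sum_sub_distrib]
  -- first and third terms of hBexp agree
  have hB12 : ∀ cc, (∑ a, ∑ e, ∑ d, ∑ l, gi a e * Gm a d * (1/2) * (gi d l * Dg e l cc))
      = (∑ a, ∑ e, ∑ d, ∑ l, gi a e * Gm a d * (1/2) * (gi d l * Dg l e cc)) := by
    intro cc
    rw [← nested4 (fun a e d l => gi a e * Gm a d * (1/2) * (gi d l * Dg e l cc)),
        ← nested4 (fun a e d l => gi a e * Gm a d * (1/2) * (gi d l * Dg l e cc))]
    refine Fintype.sum_equiv ⟨fun p => (p.2.2.1, p.2.2.2, p.1, p.2.1),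
      fun p => (p.2.2.1, p.2.2.2, p.1, p.2.1), fun p => rfl, fun p => rfl⟩ _ _ ?_
    rintro ⟨a, e, d, l⟩; simp only [Equiv.coe_fn_mk]
    rw [hGm d a]; ring
  have hB : ∀ cc, (∑ a, ∑ e, ∑ d, gi a e * (CS gi Dg d e cc * Gm a d))
      = ∑ a, ∑ e, ∑ d, ∑ l, gi a e * Gm a d * (1/2) * (gi d l * Dg cc l e) := by
    intro cc; rw [hBexp cc, hB12 cc]; ring
  -- Claim 1
  have hclaim1 : (∑ cc, Xv cc * (∑ a, ∑ e, ∑ d, gi a e * (CS gi Dg d e cc * Gm a d)))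
      = (1/2) * ∑ a, ∑ b, ∑ c, ∑ d, gi a c * gi b d * Gm a b * (∑ e, Xv e * Dg e c d) := by
    have h1 : (∑ cc, Xv cc * (∑ a, ∑ e, ∑ d, gi a e * (CS gi Dg d e cc * Gm a d)))
        = ∑ cc, ∑ a, ∑ e, ∑ d, ∑ l, Xv cc * (gi a e * Gm a d * (1/2) * (gi d l * Dg cc l e)) := by
      refine Finset.sum_congr rfl fun cc _ => ?_
      rw [hB cc]
      simp only [Finset.mul_sum]
    have h2 : (1/2) * (∑ a, ∑ b, ∑ c, ∑ d, gi a c * gi b d * Gm a b * (∑ e, Xv e * Dg e c d))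
        = ∑ a, ∑ b, ∑ c, ∑ d, ∑ e, (1/2) * (gi a c * gi b d * Gm a b * (Xv e * Dg e c d)) := by
      simp only [Finset.mul_sum]
    rw [h1, h2,
      ← nested5 (fun cc a e d l => Xv cc * (gi a e * Gm a d * (1/2) * (gi d l * Dg cc l e))),
      ← nested5 (fun a b c d e => (1/2) * (gi a c * gi b d * Gm a b * (Xv e * Dg e c d)))]
    refine Fintype.sum_equiv ⟨fun p => (p.2.1, p.2.2.2.1, p.2.2.1, p.2.2.2.2, p.1),
      fun q => (q.2.2.2.2, q.1, q.2.2.1, q.2.1, q.2.2.2.1), fun p => rfl, fun q => rfl⟩ _ _ ?_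
    rintro ⟨cc, a, e, d, l⟩; simp only [Equiv.coe_fn_mk]
    rw [hDg cc e l]; ring
  -- expansion of the A part
  have hAexp : ∀ cc, (∑ a, ∑ e, ∑ d, gi a e * (CS gi Dg d e a * Gm d cc))
      = (∑ a, ∑ e, ∑ d, ∑ l, gi a e * Gm d cc * (1/2) * (gi d l * Dg e l a))
        + (∑ a, ∑ e, ∑ d, ∑ l, gi a e * Gm d cc * (1/2) * (gi d l * Dg a l e))
        - (∑ a, ∑ e, ∑ d, ∑ l, gi a e * Gm d cc * (1/2) * (gi d l * Dg l e a)) := by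
    intro cc
    calc (∑ a, ∑ e, ∑ d, gi a e * (CS gi Dg d e a * Gm d cc))
        = ∑ a, ∑ e, ∑ d, ((∑ l, gi a e * Gm d cc * (1/2) * (gi d l * Dg e l a))
            + (∑ l, gi a e * Gm d cc * (1/2) * (gi d l * Dg a l e))
            - (∑ l, gi a e * Gm d cc * (1/2) * (gi d l * Dg l e a))) :=
          Finset.sum_congr rfl fun a _ => Finset.sum_congr rfl fun e _ =>
            Finset.sum_congr rfl fun d _ => csexp gi Dg e a d (gi a e) (Gm d cc)
      _ = _ := by simp [Finset.sum_add_distrib, Finset.sum_sub_distrib]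
  have hA12 : ∀ cc, (∑ a, ∑ e, ∑ d, ∑ l, gi a e * Gm d cc * (1/2) * (gi d l * Dg a l e))
      = (∑ a, ∑ e, ∑ d, ∑ l, gi a e * Gm d cc * (1/2) * (gi d l * Dg e l a)) := by
    intro cc
    rw [← nested4 (fun a e d l => gi a e * Gm d cc * (1/2) * (gi d l * Dg a l e)),
        ← nested4 (fun a e d l => gi a e * Gm d cc * (1/2) * (gi d l * Dg e l a))]
    refine Fintype.sum_equiv ⟨fun p => (p.2.1, p.1, p.2.2.1, p.2.2.2),
      fun p => (p.2.1, p.1, p.2.2.1, p.2.2.2), fun p => rfl, fun p => rfl⟩ _ _ ?_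
    rintro ⟨a, e, d, l⟩; simp only [Equiv.coe_fn_mk]
    rw [hgi e a]
  have hA : ∀ cc, (∑ a, ∑ e, ∑ d, gi a e * (CS gi Dg d e a * Gm d cc))
      = 2 * (∑ a, ∑ e, ∑ d, ∑ l, gi a e * Gm d cc * (1/2) * (gi d l * Dg e l a))
        - (∑ a, ∑ e, ∑ d, ∑ l, gi a e * Gm d cc * (1/2) * (gi d l * Dg l e a)) := by
    intro cc; rw [hAexp cc, hA12 cc]; ring
  -- L1 via the derivative of the inverse
  have hL1 : (∑ b, ∑ a, ∑ c, Dgi b b a * Gm a c * Xv c)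
      = -∑ b, ∑ a, ∑ c, ∑ p, ∑ q, gi b p * Dg b p q * gi q a * Gm a c * Xv c := by
    rw [← Finset.sum_neg_distrib]
    refine Finset.sum_congr rfl fun b _ => ?_
    rw [← Finset.sum_neg_distrib]
    refine Finset.sum_congr rfl fun a _ => ?_
    rw [← Finset.sum_neg_distrib]
    refine Finset.sum_congr rfl fun c _ => ?_
    rw [hDgi b b a]
    simp only [neg_mul, Finset.sum_mul, neg_neg]
  -- contracted Christoffel symbol
  have hCS2 : ∀ e, (∑ b, CS gi Dg b b e) = (1/2) * ∑ b, ∑ l, gi b l * Dg e l b := by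
    intro e
    have h1 : ∀ b : ι, CS gi Dg b b e
        = (∑ l, (1:ℝ) * 1 * (1/2) * (gi b l * Dg b l e))
          + (∑ l, (1:ℝ) * 1 * (1/2) * (gi b l * Dg e l b))
          - (∑ l, (1:ℝ) * 1 * (1/2) * (gi b l * Dg l b e)) := by
      intro b
      have h := csexp gi Dg b e b 1 1
      rw [one_mul, mul_one] at h
      exact h
    rw [Finset.sum_congr rfl fun b _ => h1 b]
    simp only [Finset.sum_add_distrib, Finset.sum_sub_distrib, one_mul]
    have hcanc : (∑ b, ∑ l, (1/2 : ℝ) * (gi b l * Dg b l e))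
        = ∑ b, ∑ l, (1/2 : ℝ) * (gi b l * Dg l b e) := by
      rw [← nested2 (fun b l => (1/2 : ℝ) * (gi b l * Dg b l e)),
          ← nested2 (fun b l => (1/2 : ℝ) * (gi b l * Dg l b e))]
      refine Fintype.sum_equiv ⟨fun p => (p.2, p.1), fun p => (p.2, p.1),
        fun p => rfl, fun p => rfl⟩ _ _ ?_
      rintro ⟨b, l⟩; simp only [Equiv.coe_fn_mk]
      rw [hgi l b]
    rw [hcanc]
    rw [show (1/2 : ℝ) * (∑ b, ∑ l, gi b l * Dg e l b)
        = ∑ b, ∑ l, (1/2 : ℝ) * (gi b l * Dg e l b) by simp only [Finset.mul_sum]]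
    ring
  -- L4 flattened
  have hL4 : (∑ b, ∑ e, CS gi Dg b b e * (∑ a, ∑ c, gi e a * Gm a c * Xv c))
      = ∑ e, ∑ a, ∑ c, ∑ b, ∑ l, (1/2) * (gi b l * Dg e l b) * (gi e a * Gm a c * Xv c) := by
    rw [Finset.sum_comm]
    refine Finset.sum_congr rfl fun e _ => ?_
    rw [← Finset.sum_mul, hCS2 e]
    simp only [Finset.mul_sum, Finset.sum_mul]
  -- claim 2 components
  have hXA1 : (∑ cc, Xv cc * (2 * (∑ a, ∑ e, ∑ d, ∑ l, gi a e * Gm d cc * (1/2) * (gi d l * Dg e l a))))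
      = ∑ b, ∑ a, ∑ c, ∑ p, ∑ q, gi b p * Dg b p q * gi q a * Gm a c * Xv c := by
    have h1 : (∑ cc, Xv cc * (2 * (∑ a, ∑ e, ∑ d, ∑ l, gi a e * Gm d cc * (1/2) * (gi d l * Dg e l a))))
        = ∑ cc, ∑ a, ∑ e, ∑ d, ∑ l, Xv cc * (2 * (gi a e * Gm d cc * (1/2) * (gi d l * Dg e l a))) := by
      simp only [Finset.mul_sum]
    rw [h1,
      ← nested5 (fun cc a e d l => Xv cc * (2 * (gi a e * Gm d cc * (1/2) * (gi d l * Dg e l a)))),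
      ← nested5 (fun b a c p q => gi b p * Dg b p q * gi q a * Gm a c * Xv c)]
    refine Fintype.sum_equiv ⟨fun p => (p.2.2.1, p.2.2.2.1, p.1, p.2.1, p.2.2.2.2),
      fun q => (q.2.2.1, q.2.2.2.1, q.1, q.2.1, q.2.2.2.2), fun p => rfl, fun q => rfl⟩ _ _ ?_
    rintro ⟨cc, a, e, d, l⟩; simp only [Equiv.coe_fn_mk]
    rw [hDg e l a, hgi e a, hgi l d]; ring
  have hXA2L4 : (∑ cc, Xv cc * (∑ a, ∑ e, ∑ d, ∑ l, gi a e * Gm d cc * (1/2) * (gi d l * Dg l e a)))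
      = ∑ e, ∑ a, ∑ c, ∑ b, ∑ l, (1/2) * (gi b l * Dg e l b) * (gi e a * Gm a c * Xv c) := by
    have h1 : (∑ cc, Xv cc * (∑ a, ∑ e, ∑ d, ∑ l, gi a e * Gm d cc * (1/2) * (gi d l * Dg l e a)))
        = ∑ cc, ∑ a, ∑ e, ∑ d, ∑ l, Xv cc * (gi a e * Gm d cc * (1/2) * (gi d l * Dg l e a)) := by
      simp only [Finset.mul_sum]
    rw [h1,
      ← nested5 (fun cc a e d l => Xv cc * (gi a e * Gm d cc * (1/2) * (gi d l * Dg l e a))),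
      ← nested5 (fun e a c b l => (1/2) * (gi b l * Dg e l b) * (gi e a * Gm a c * Xv c))]
    refine Fintype.sum_equiv ⟨fun p => (p.2.2.2.2, p.2.2.2.1, p.1, p.2.1, p.2.2.1),
      fun q => (q.2.2.1, q.2.2.2.1, q.2.2.2.2, q.2.1, q.1), fun p => rfl, fun q => rfl⟩ _ _ ?_
    rintro ⟨cc, a, e, d, l⟩; simp only [Equiv.coe_fn_mk]
    rw [hgi l d]; ring
  -- assemble L2
  have hL2chain : (∑ b, ∑ a, ∑ c, gi b a * DG b a c * Xv c)
      = (∑ cc, Xv cc * (∑ a, ∑ e, ∑ d, gi a e * (CS gi Dg d e a * Gm d cc)))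
        + (∑ cc, Xv cc * (∑ a, ∑ e, ∑ d, gi a e * (CS gi Dg d e cc * Gm a d))) := by
    rw [hL2, ← Finset.sum_add_distrib]
    exact Finset.sum_congr rfl fun cc _ => by rw [hdf' cc]; ring
  have hAchain : (∑ cc, Xv cc * (∑ a, ∑ e, ∑ d, gi a e * (CS gi Dg d e a * Gm d cc)))
      = (∑ cc, Xv cc * (2 * (∑ a, ∑ e, ∑ d, ∑ l, gi a e * Gm d cc * (1/2) * (gi d l * Dg e l a))))
        - (∑ cc, Xv cc * (∑ a, ∑ e, ∑ d, ∑ l, gi a e * Gm d cc * (1/2) * (gi d l * Dg l e a))) := by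
    rw [← Finset.sum_sub_distrib]
    exact Finset.sum_congr rfl fun cc _ => by rw [hA cc]; ring
  rw [hsplit, hRsplit, hS32, hS2T, hTL3, hL2chain, hAchain, hclaim1, hXA1, hXA2L4, hL1, hL4]
  ring


set_option maxHeartbeats 2000000 in
/-- for a divergence-free symmetric (0,2)-tensor G with tr_g G = c·Q,
a vector field X and a bounded domain Ω with smooth boundary (encoded by a
boundary-integral functional satisfying the Riemannian divergence theorem),
∫_{∂Ω} G(X,ν_g) dω_g = (1/2)∫_Ω ⟨G, £_{g,conf}X⟩_g dV_g + (c/n)∫_Ω Q·div_g X dV_g,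
where £_{g,conf}X = £_X g − (2/n)(div_g X)g is the conformal Killing operator. -/
theorem divfree_tensor_flux_conformal (n : ℕ) (hn : 1 ≤ n)
    (g ginv G : Eu n → Matrix (Fin n) (Fin n) ℝ) (X : Eu n → Fin n → ℝ)
    (Q : Eu n → ℝ) (c : ℝ)
    (hgs : ∀ i j, ContDiff ℝ (⊤ : ℕ∞) (fun x => g x i j))
    (hginvs : ∀ i j, ContDiff ℝ (⊤ : ℕ∞) (fun x => ginv x i j))
    (hsym : ∀ x, (g x).IsSymm) (hpos : ∀ x, (g x).PosDef)
    (hinv : ∀ x, ginv x * g x = 1 ∧ g x * ginv x = 1)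
    (hGs : ∀ i j, ContDiff ℝ (⊤ : ℕ∞) (fun x => G x i j))
    (hGsym : ∀ x, (G x).IsSymm)
    (hdivfree : ∀ b x, divT g ginv G b x = 0)
    (htrace : ∀ x, (∑ a, ∑ b, ginv x a b * G x a b) = c * Q x)
    (hXs : ∀ i, ContDiff ℝ (⊤ : ℕ∞) (fun x => X x i))
    (Ω : Set (Eu n)) (hΩ : MeasurableSet Ω) (hb : Bornology.IsBounded Ω)
    (bdry : (Eu n → Fin n → ℝ) → ℝ)
    (hdivthm : ∀ Y : Eu n → Fin n → ℝ, (∀ i, ContDiff ℝ (⊤ : ℕ∞) (fun x => Y x i)) →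
      (∫ x in Ω, divV g ginv Y x * Real.sqrt (g x).det) = bdry Y) :
    bdry (fun x b => ∑ a, ∑ c, ginv x b a * G x a c * X x c)
      = (1/2) * (∫ x in Ω,
          (∑ a, ∑ b, ∑ c, ∑ d, ginv x a c * ginv x b d * G x a b
            * (lieDer g X c d x - (2/(n:ℝ)) * divV g ginv X x * g x c d))
            * Real.sqrt (g x).det)
        + (c/(n:ℝ)) * ∫ x in Ω, Q x * divV g ginv X x * Real.sqrt (g x).det := by
  classical
  -- symmetry facts
  have hg_symm : ∀ (x : Eu n) (i j : Fin n), g x i j = g x j i := by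
    intro x i j
    have := hsym x
    rw [Matrix.IsSymm] at this
    conv_lhs => rw [← this]
    rfl
  have hG_symm : ∀ (x : Eu n) (i j : Fin n), G x i j = G x j i := by
    intro x i j
    have := hGsym x
    rw [Matrix.IsSymm] at this
    conv_lhs => rw [← this]
    rfl
  have hginv_symm : ∀ (x : Eu n) (i j : Fin n), ginv x i j = ginv x j i := by
    intro x i j
    have h1 : ginv x = (g x)⁻¹ := (Matrix.inv_eq_left_inv (hinv x).1).symm
    have h2 : Matrix.transpose (ginv x) = ginv x := by
      rw [h1, Matrix.transpose_nonsing_inv, (hsym x)]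
    conv_lhs => rw [← h2]
    rfl
  have hdelta : ∀ (x : Eu n) (i j : Fin n),
      (∑ k, ginv x i k * g x k j) = if i = j then 1 else 0 := by
    intro x i j
    rw [← Matrix.mul_apply, (hinv x).1, Matrix.one_apply]
  have hdelta2 : ∀ (x : Eu n) (i j : Fin n),
      (∑ k, g x i k * ginv x k j) = if i = j then 1 else 0 := by
    intro x i j
    rw [← Matrix.mul_apply, (hinv x).2, Matrix.one_apply]
  -- differentiability helper
  have dd : ∀ {f : Eu n → ℝ}, ContDiff ℝ (⊤ : ℕ∞) f → ∀ x, DifferentiableAt ℝ f x :=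
    fun hf x => hf.differentiable (by simp) x
  -- symmetry of partial derivatives of g
  have hDg_symm : ∀ (x : Eu n) (k i j : Fin n),
      pd k (fun y => g y i j) x = pd k (fun y => g y j i) x := by
    intro x k i j
    congr 1
    funext y
    exact hg_symm y i j
  -- derivative of the inverse metric
  have hDgi : ∀ (x : Eu n) (k i j : Fin n), pd k (fun y => ginv y i j) x
      = -∑ p, ∑ q, ginv x i p * pd k (fun y => g y p q) x * ginv x q j := by
    intro x k i j
    have hz : ∀ jj : Fin n, (∑ l, (pd k (fun y => ginv y i l) x * g x l jj
        + ginv x i l * pd k (fun y => g y l jj) x)) = 0 := by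
      intro jj
      have hconstfun : (fun y => ∑ l, ginv y i l * g y l jj)
          = fun _ => ((1 : Matrix (Fin n) (Fin n) ℝ) i jj) := by
        funext y; rw [← Matrix.mul_apply, (hinv y).1]
      have h0 : pd k (fun y => ∑ l, ginv y i l * g y l jj) x = 0 := by
        rw [hconstfun]; exact pd_const k _ x
      rw [pd_sum Finset.univ k (fun l _ => ((hginvs i l).mul (hgs l jj)).differentiable (by simp) x),
        Finset.sum_congr rfl (fun l _ => pd_mul k (dd (hginvs i l) x) (dd (hgs l jj) x))] at h0
      exact h0
    have hkey : ∀ q : Fin n, (∑ l, pd k (fun y => ginv y i l) x * g x l q)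
        = -∑ l, ginv x i l * pd k (fun y => g y l q) x := by
      intro q
      have h := hz q
      rw [Finset.sum_add_distrib] at h
      linarith
    calc pd k (fun y => ginv y i j) x
        = ∑ l, pd k (fun y => ginv y i l) x * (if l = j then 1 else 0) := by
          simp
      _ = ∑ l, pd k (fun y => ginv y i l) x * (∑ q, g x l q * ginv x q j) := by
          refine Finset.sum_congr rfl fun l _ => ?_
          rw [hdelta2 x l j]
      _ = ∑ l, ∑ q, (pd k (fun y => ginv y i l) x * g x l q) * ginv x q j := by
          refine Finset.sum_congr rfl fun l _ => ?_
          rw [Finset.mul_sum]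
          exact Finset.sum_congr rfl fun q _ => by ring
      _ = ∑ q, (∑ l, pd k (fun y => ginv y i l) x * g x l q) * ginv x q j := by
          rw [Finset.sum_comm]
          exact Finset.sum_congr rfl fun q _ => by rw [Finset.sum_mul]
      _ = ∑ q, (-∑ l, ginv x i l * pd k (fun y => g y l q) x) * ginv x q j := by
          exact Finset.sum_congr rfl fun q _ => by rw [hkey q]
      _ = -∑ p, ∑ q, ginv x i p * pd k (fun y => g y p q) x * ginv x q j := by
          rw [show (∑ q, (-∑ l, ginv x i l * pd k (fun y => g y l q) x) * ginv x q j)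
              = -∑ q, ∑ l, ginv x i l * pd k (fun y => g y l q) x * ginv x q j from by
            rw [← Finset.sum_neg_distrib]
            exact Finset.sum_congr rfl fun q _ => by rw [neg_mul, Finset.sum_mul]]
          exact congrArg Neg.neg Finset.sum_comm
  -- the pointwise divergence identity
  have hpoint : ∀ x : Eu n,
      divV g ginv (fun y b => ∑ a, ∑ c, ginv y b a * G y a c * X y c) x
      = (1/2) * ∑ a, ∑ b, ∑ cc, ∑ d,
          ginv x a cc * ginv x b d * G x a b * lieDer g X cc d x := by
    intro x
    have hpd : ∀ b : Fin n, pd b (fun y => ∑ a, ∑ c, ginv y b a * G y a c * X y c) x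
        = ∑ a, ∑ cc, (pd b (fun y => ginv y b a) x * G x a cc * X x cc
            + ginv x b a * pd b (fun y => G y a cc) x * X x cc
            + ginv x b a * G x a cc * pd b (fun y => X y cc) x) := by
      intro b
      rw [pd_sum Finset.univ b (fun a _ => by
        exact DifferentiableAt.fun_sum fun cc _ => dd (((hginvs b a).mul (hGs a cc)).mul (hXs cc)) x)]
      refine Finset.sum_congr rfl fun a _ => ?_
      rw [pd_sum Finset.univ b (fun cc _ => dd (((hginvs b a).mul (hGs a cc)).mul (hXs cc)) x)]
      refine Finset.sum_congr rfl fun cc _ => ?_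
      rw [pd_mul b (dd ((hginvs b a).mul (hGs a cc)) x) (dd (hXs cc) x),
        pd_mul b (dd (hginvs b a) x) (dd (hGs a cc) x)]
      ring
    have halg := keyalg (fun i j => ginv x i j) (fun i j => g x i j) (fun i j => G x i j)
        (fun i => X x i) (fun k i j => pd k (fun y => g y i j) x)
        (fun k i j => pd k (fun y => G y i j) x) (fun k i => pd k (fun y => X y i) x)
        (fun k i j => pd k (fun y => ginv y i j) x)
        (hginv_symm x) (hg_symm x) (hG_symm x) (hDg_symm x) (hdelta x) (hDgi x)
        (fun b => hdivfree b x)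
    calc divV g ginv (fun y b => ∑ a, ∑ c, ginv y b a * G y a c * X y c) x
        = (∑ b, pd b (fun y => ∑ a, ∑ c, ginv y b a * G y a c * X y c) x)
          + ∑ aa, ∑ cc, chris g ginv aa aa cc x
              * (∑ a, ∑ c, ginv x cc a * G x a c * X x c) := rfl
      _ = (∑ b, ∑ a, ∑ cc, (pd b (fun y => ginv y b a) x * G x a cc * X x cc
            + ginv x b a * pd b (fun y => G y a cc) x * X x cc
            + ginv x b a * G x a cc * pd b (fun y => X y cc) x))
          + ∑ aa, ∑ cc, chris g ginv aa aa cc x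
              * (∑ a, ∑ c, ginv x cc a * G x a c * X x c) := by
          rw [Finset.sum_congr rfl fun b _ => hpd b]
      _ = _ := halg
    -- step A: trace contraction, pointwise
  have hstepA : ∀ x : Eu n,
      (∑ a, ∑ b, ∑ cc, ∑ d, ginv x a cc * ginv x b d * G x a b
          * (lieDer g X cc d x - (2/(n:ℝ)) * divV g ginv X x * g x cc d))
      = (∑ a, ∑ b, ∑ cc, ∑ d, ginv x a cc * ginv x b d * G x a b * lieDer g X cc d x)
        - (2/(n:ℝ)) * divV g ginv X x * (c * Q x) := by
    intro x
    have h1 : (∑ a, ∑ b, ∑ cc, ∑ d, ginv x a cc * ginv x b d * G x a b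
          * (lieDer g X cc d x - (2/(n:ℝ)) * divV g ginv X x * g x cc d))
        = (∑ a, ∑ b, ∑ cc, ∑ d, ginv x a cc * ginv x b d * G x a b * lieDer g X cc d x)
          - (∑ a, ∑ b, ∑ cc, ∑ d, ginv x a cc * ginv x b d * G x a b
              * ((2/(n:ℝ)) * divV g ginv X x * g x cc d)) := by
      simp [mul_sub, Finset.sum_sub_distrib]
    rw [h1]
    congr 1
    calc (∑ a, ∑ b, ∑ cc, ∑ d, ginv x a cc * ginv x b d * G x a b
            * ((2/(n:ℝ)) * divV g ginv X x * g x cc d))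
        = ∑ a, ∑ b, ∑ cc, (ginv x a cc * G x a b * ((2/(n:ℝ)) * divV g ginv X x))
            * (if b = cc then 1 else 0) := by
          refine Finset.sum_congr rfl fun a _ => Finset.sum_congr rfl fun b _ =>
            Finset.sum_congr rfl fun cc _ => ?_
          rw [← hdelta x b cc, Finset.mul_sum]
          refine Finset.sum_congr rfl fun d _ => ?_
          rw [hg_symm x cc d]; ring
      _ = ∑ a, ∑ b, ginv x a b * G x a b * ((2/(n:ℝ)) * divV g ginv X x) := by
          refine Finset.sum_congr rfl fun a _ => Finset.sum_congr rfl fun b _ => ?_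
          simp
      _ = (2/(n:ℝ)) * divV g ginv X x * (c * Q x) := by
          rw [← htrace x, Finset.mul_sum]
          refine Finset.sum_congr rfl fun a _ => ?_
          rw [Finset.mul_sum]
          exact Finset.sum_congr rfl fun b _ => by ring
  -- continuity facts
  have contpd : ∀ (f : Eu n → ℝ), ContDiff ℝ (⊤ : ℕ∞) f → ∀ i, Continuous (fun x => pd i f x) :=
    fun f hf i => pd_cont f hf i
  have hchrisC : ∀ k i j : Fin n, Continuous (fun x => chris g ginv k i j x) := by
    intro k i j
    apply Continuous.mul continuous_const
    refine continuous_finset_sum _ fun l _ => Continuous.mul (hginvs k l).continuous ?_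
    exact ((contpd _ (hgs l j) i).add (contpd _ (hgs l i) j)).sub (contpd _ (hgs i j) l)
  have hdivVXC : Continuous (fun x => divV g ginv X x) := by
    refine Continuous.add (continuous_finset_sum _ fun a _ => contpd _ (hXs a) a) ?_
    exact continuous_finset_sum _ fun a _ => continuous_finset_sum _ fun cc _ =>
      (hchrisC a a cc).mul (hXs cc).continuous
  have hlieC : ∀ cc d : Fin n, Continuous (fun x => lieDer g X cc d x) := by
    intro cc d
    refine continuous_finset_sum _ fun e _ => ?_
    refine Continuous.add (Continuous.add ?_ ?_) ?_
    · exact (hXs e).continuous.mul (contpd _ (hgs cc d) e)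
    · exact (hgs e d).continuous.mul (contpd _ (hXs e) cc)
    · exact (hgs cc e).continuous.mul (contpd _ (hXs e) d)
  have hsqrtC : Continuous (fun x => Real.sqrt (g x).det) := by
    refine Real.continuous_sqrt.comp ?_
    exact Continuous.matrix_det (continuous_matrix fun i j => (hgs i j).continuous)
  have hF1C : Continuous (fun x => (∑ a, ∑ b, ∑ cc, ∑ d,
      ginv x a cc * ginv x b d * G x a b * lieDer g X cc d x) * Real.sqrt (g x).det) := by
    refine Continuous.mul ?_ hsqrtC
    refine continuous_finset_sum _ fun a _ => continuous_finset_sum _ fun b _ =>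
      continuous_finset_sum _ fun cc _ => continuous_finset_sum _ fun d _ => ?_
    exact (((hginvs a cc).continuous.mul (hginvs b d).continuous).mul
      (hGs a b).continuous).mul (hlieC cc d)
  have hf2C : Continuous (fun x => (∑ a, ∑ b, ginv x a b * G x a b)
      * divV g ginv X x * Real.sqrt (g x).det) := by
    refine Continuous.mul (Continuous.mul ?_ hdivVXC) hsqrtC
    exact continuous_finset_sum _ fun a _ => continuous_finset_sum _ fun b _ =>
      (hginvs a b).continuous.mul (hGs a b).continuous
  -- integrability on Ω
  have hIconv : ∀ {f : Eu n → ℝ}, Continuous f → IntegrableOn f Ω := by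
    intro f hf
    have hK : IsCompact (closure Ω) :=
      Metric.isCompact_of_isClosed_isBounded isClosed_closure hb.closure
    exact (hf.continuousOn.integrableOn_compact hK).mono_set subset_closure
  -- smoothness of the flux vector field
  have hYs : ∀ i, ContDiff ℝ (⊤ : ℕ∞) (fun x => ∑ a, ∑ c, ginv x i a * G x a c * X x c) :=
    fun i => ContDiff.sum fun a _ => ContDiff.sum fun cc _ =>
      ((hginvs i a).mul (hGs a cc)).mul (hXs cc)
  have hY := hdivthm (fun x b => ∑ a, ∑ c, ginv x b a * G x a c * X x c) hYs
  rw [← hY]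
  -- rewrite the left integral using hpoint
  have key1 : (∫ x in Ω, divV g ginv (fun y b => ∑ a, ∑ c, ginv y b a * G y a c * X y c) x
        * Real.sqrt (g x).det)
      = (1/2) * ∫ x in Ω, (∑ a, ∑ b, ∑ cc, ∑ d,
          ginv x a cc * ginv x b d * G x a b * lieDer g X cc d x) * Real.sqrt (g x).det := by
    rw [← MeasureTheory.integral_const_mul]
    refine MeasureTheory.integral_congr_ae (Filter.Eventually.of_forall fun x => ?_)
    dsimp only
    rw [hpoint x]; ring
  have key2 : (c/(n:ℝ)) * (∫ x in Ω, Q x * divV g ginv X x * Real.sqrt (g x).det)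
      = (1/(n:ℝ)) * ∫ x in Ω, (∑ a, ∑ b, ginv x a b * G x a b)
          * divV g ginv X x * Real.sqrt (g x).det := by
    calc (c/(n:ℝ)) * (∫ x in Ω, Q x * divV g ginv X x * Real.sqrt (g x).det)
        = (1/(n:ℝ)) * ∫ x in Ω, c * (Q x * divV g ginv X x * Real.sqrt (g x).det) := by
          rw [MeasureTheory.integral_const_mul]; ring
      _ = _ := by
          congr 1
          refine MeasureTheory.integral_congr_ae (Filter.Eventually.of_forall fun x => ?_)
          dsimp only
          rw [htrace x]; ring
  have key3 : (∫ x in Ω, (∑ a, ∑ b, ∑ cc, ∑ d, ginv x a cc * ginv x b d * G x a b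
        * (lieDer g X cc d x - (2/(n:ℝ)) * divV g ginv X x * g x cc d))
        * Real.sqrt (g x).det)
      = (∫ x in Ω, (∑ a, ∑ b, ∑ cc, ∑ d,
            ginv x a cc * ginv x b d * G x a b * lieDer g X cc d x) * Real.sqrt (g x).det)
        - (2/(n:ℝ)) * ∫ x in Ω, (∑ a, ∑ b, ginv x a b * G x a b)
            * divV g ginv X x * Real.sqrt (g x).det := by
    rw [← MeasureTheory.integral_const_mul,
      ← MeasureTheory.integral_sub (hIconv hF1C) ((hIconv hf2C).const_mul _)]
    refine MeasureTheory.integral_congr_ae (Filter.Eventually.of_forall fun x => ?_)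
    dsimp only
    rw [hstepA x, ← htrace x]
    ring
  rw [key1, key2, key3]
  ring
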